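/- There is an absolute constant C such that for all x ∈ ℝ² \ {0} and a ∈ ℝ, ∫₀^∞ |(∇K)(O(at)x, t)| dt ≤ C/|x|, where K(x,t) = G(x,t)𝕀 + H(x,t) with G the 2D heat kernel and H(x,t) = ∫_t^∞ ∇²G(x,s) ds. -/

import Mathlib

open Real Set MeasureTheory

noncomputable def pd (i : Fin 2) (f : (Fin 2 → ℝ) → ℝ) (x : Fin 2 → ℝ) : ℝ :=
  fderiv ℝ f x (Pi.single i 1)

def nsq (x : Fin 2 → ℝ) : ℝ := x 0 ^ 2 + x 1 ^ 2

noncomputable def heatG (x : Fin 2 → ℝ) (t : ℝ) : ℝ :=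
  1 / (4 * π * t) * Real.exp (-(nsq x) / (4 * t))

/-- Entries of `K(x,t) = G(x,t)𝕀 + ∫_t^∞ ∇²G(x,s) ds`. -/
noncomputable def Kent (i j : Fin 2) (x : Fin 2 → ℝ) (t : ℝ) : ℝ :=
  (if i = j then 1 else 0) * heatG x t
    + ∫ s in Set.Ioi t, pd i (fun z => pd j (fun w => heatG w s) z) x

/-- `|∇ₓK(x,t)|`: sum of absolute values of all first `x`-derivatives of the entries. -/
noncomputable def gradK (x : Fin 2 → ℝ) (t : ℝ) : ℝ :=
  ∑ i : Fin 2, ∑ j : Fin 2, ∑ k : Fin 2, |pd k (fun z => Kent i j z t) x|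

/-- Rotation `O(θ)x`. -/
noncomputable def rot (θ : ℝ) (x : Fin 2 → ℝ) : Fin 2 → ℝ :=
  ![Real.cos θ * x 0 - Real.sin θ * x 1, Real.sin θ * x 0 + Real.cos θ * x 1]

/-!
Every `x`-derivative of the heat kernel is `G` times a polynomial in `x` and `1/t`. With
`w = |x|²/(4t)`, the inequality `wⁿ e^{-w} ≤ n!` bounds each term `|x|^k t^{-n} e^{-|x|²/(4t)}`
by `C max(|x|², t)^{k/2-n}`, so `|∇G(x,t)| ≲ max(|x|², t)^{-3/2}` and
`|∇³G(x,s)| ≲ max(|x|², s)^{-5/2}`. Integrating the latter over `s > t` (differentiation under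
the integral is dominated by `s^{-5/2}`) gives `|∇K(x,t)| ≲ max(|x|², t)^{-3/2}`. This depends on
`x` only through `|x|`, so the rotation drops out, and `∫₀^∞ max(b, t)^{-3/2} dt = 3/√b`.
-/

section Covector

variable {ι : Type*} [Fintype ι]

noncomputable def covec (a : ι → ℝ) : (ι → ℝ) →L[ℝ] ℝ :=
  ∑ i, a i • ContinuousLinearMap.proj i

@[simp] lemma covec_apply (a v : ι → ℝ) : covec a v = ∑ i, a i * v i := by
  simp [covec]

lemma covec_single [DecidableEq ι] (a : ι → ℝ) (k : ι) : covec a (Pi.single k 1) = a k := by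
  simp [Pi.single_apply]

lemma eq_covec [DecidableEq ι] (L : (ι → ℝ) →L[ℝ] ℝ) :
    L = covec fun k => L (Pi.single k 1) :=
  ContinuousLinearMap.ext fun v => by
    conv_lhs => rw [pi_eq_sum_univ' v]
    simp only [map_sum, map_smul, smul_eq_mul, covec_apply, mul_comm]

lemma norm_covec_le (a : ι → ℝ) : ‖covec a‖ ≤ ∑ i, |a i| := by
  refine ContinuousLinearMap.opNorm_le_bound _ (by positivity) fun v => ?_
  rw [covec_apply, Finset.sum_mul]
  refine (norm_sum_le _ _).trans (Finset.sum_le_sum fun i _ => ?_)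
  rw [norm_mul, Real.norm_eq_abs]
  exact mul_le_mul_of_nonneg_left (norm_le_pi_norm v i) (abs_nonneg _)

lemma integral_covec {α : Type*} [MeasurableSpace α] {μ : Measure α} {f : α → ι → ℝ}
    (hf : ∀ i, Integrable (fun a => f a i) μ) :
    ∫ a, covec (f a) ∂μ = covec fun i => ∫ a, f a i ∂μ := by
  simp only [covec]
  rw [integral_finsetSum _ fun i _ => (hf i).smul_const _]
  simp only [integral_smul_const]

end Covector

lemma rpow_div_pow_mul_exp_le {a b t : ℝ} (n : ℕ) (ha : 0 ≤ a) (hb : 0 ≤ b) (ht : 0 < t) :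
    b ^ a / t ^ n * exp (-b / (4 * t)) ≤ 4 ^ n * n.factorial * max b t ^ (a - n) := by
  have hC : (1 : ℝ) ≤ 4 ^ n * n.factorial :=
    one_le_mul_of_one_le_of_one_le (one_le_pow₀ (by norm_num)) (by exact_mod_cast n.factorial_pos)
  rcases le_or_gt b t with hbt | htb
  · have hexp : exp (-b / (4 * t)) ≤ 1 := exp_le_one_iff.mpr (by
      apply div_nonpos_of_nonpos_of_nonneg <;> linarith)
    rw [max_eq_right hbt, rpow_sub ht, rpow_natCast]
    calc b ^ a / t ^ n * exp (-b / (4 * t)) ≤ t ^ a / t ^ n * 1 := by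
          gcongr
      _ ≤ 4 ^ n * n.factorial * (t ^ a / t ^ n) := by
          rw [mul_one]; exact le_mul_of_one_le_left (by positivity) hC
  · have hb' : 0 < b := ht.trans htb
    have hw : (b / (4 * t)) ^ n * exp (-(b / (4 * t))) ≤ n.factorial := by
      have := pow_div_factorial_le_exp (b / (4 * t)) (by positivity) n
      rw [exp_neg, ← div_eq_mul_inv, div_le_iff₀ (exp_pos _)]
      rw [div_le_iff₀ (by positivity)] at this
      linarith
    rw [max_eq_left htb.le, rpow_sub hb', rpow_natCast]
    calc b ^ a / t ^ n * exp (-b / (4 * t))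
        = 4 ^ n * (b ^ a / b ^ n) * ((b / (4 * t)) ^ n * exp (-(b / (4 * t)))) := by
          rw [neg_div, div_pow, mul_pow]; field_simp
      _ ≤ 4 ^ n * (b ^ a / b ^ n) * n.factorial := by gcongr
      _ = 4 ^ n * n.factorial * (b ^ a / b ^ n) := by ring

lemma pow_div_pow_mul_exp_le {r t : ℝ} (k n : ℕ) (hr : 0 ≤ r) (ht : 0 < t) :
    r ^ k / t ^ n * exp (-r ^ 2 / (4 * t)) ≤
      4 ^ n * n.factorial * max (r ^ 2) t ^ ((k : ℝ) / 2 - n) := by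
  have hk : r ^ k = (r ^ 2) ^ ((k : ℝ) / 2) := by
    rw [← rpow_natCast r 2, ← rpow_mul hr, ← rpow_natCast]; congr 1; push_cast; ring
  rw [hk]
  exact rpow_div_pow_mul_exp_le n (by positivity) (by positivity) ht

lemma max_rpow_neg_le {b s p : ℝ} (hs : 0 < s) (hp : 0 ≤ p) : max b s ^ (-p) ≤ s ^ (-p) :=
  rpow_le_rpow_of_nonpos hs (le_max_right b s) (neg_nonpos.mpr hp)

section MaxRpowIntegral

variable {m p : ℝ} (hm : 0 < m) (hp : 1 < p)
include hm hp

lemma integrableOn_max_rpow_neg : IntegrableOn (fun s => max m s ^ (-p)) (Ioi 0) := by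
  rw [← Ioc_union_Ioi_eq_Ioi hm.le, integrableOn_union]
  constructor
  · exact (integrableOn_const (C := m ^ (-p)) measure_Ioc_lt_top.ne).congr_fun
      (fun s hs => by rw [max_eq_left hs.2]) measurableSet_Ioc
  · exact (integrableOn_Ioi_rpow_of_lt (a := -p) (by linarith) hm).congr_fun
      (fun s hs => by rw [max_eq_right (le_of_lt hs)]) measurableSet_Ioi

lemma integral_max_rpow_neg : ∫ s in Ioi 0, max m s ^ (-p) = p / (p - 1) * m ^ (1 - p) := by
  have hint := integrableOn_max_rpow_neg hm hp
  rw [← Ioc_union_Ioi_eq_Ioi hm.le, integrableOn_union] at hint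
  rw [← Ioc_union_Ioi_eq_Ioi hm.le, setIntegral_union Ioc_disjoint_Ioi_same measurableSet_Ioi
    hint.1 hint.2, setIntegral_congr_fun measurableSet_Ioc (fun s hs => by rw [max_eq_left hs.2]),
    setIntegral_congr_fun measurableSet_Ioi (fun s hs => by rw [max_eq_right (le_of_lt hs)]),
    setIntegral_const, integral_Ioi_rpow_of_lt (by linarith) hm, Real.volume_real_Ioc_of_le hm.le,
    smul_eq_mul, sub_zero]
  have h1 : m * m ^ (-p) = m ^ (1 - p) := by
    rw [sub_eq_add_neg, rpow_add hm, rpow_one]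
  have hp1 : p - 1 ≠ 0 := by linarith
  have hp1' : 1 - p ≠ 0 := by linarith
  rw [h1, neg_add_eq_sub]
  field_simp
  ring

end MaxRpowIntegral

lemma setIntegral_Ioi_max_rpow_neg_le {b t p : ℝ} (ht : 0 < t) (hp : 1 < p) :
    ∫ s in Ioi t, max b s ^ (-p) ≤ p / (p - 1) * max b t ^ (1 - p) := by
  have hm : 0 < max b t := lt_max_of_lt_right ht
  calc ∫ s in Ioi t, max b s ^ (-p) = ∫ s in Ioi t, max (max b t) s ^ (-p) :=
        setIntegral_congr_fun measurableSet_Ioi fun s hs => by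
          rw [max_assoc, max_eq_right (le_of_lt (mem_Ioi.mp hs))]
    _ ≤ ∫ s in Ioi 0, max (max b t) s ^ (-p) :=
        setIntegral_mono_set (integrableOn_max_rpow_neg hm hp)
          (ae_of_all _ fun s => rpow_nonneg (hm.le.trans (le_max_left _ _)) _)
          (Ioi_subset_Ioi ht.le).eventuallyLE
    _ = p / (p - 1) * max b t ^ (1 - p) := integral_max_rpow_neg hm hp

lemma integrableOn_Ioi_max_rpow_neg {b t p : ℝ} (ht : 0 < t) (hp : 1 < p) :
    IntegrableOn (fun s => max b s ^ (-p)) (Ioi t) :=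
  (integrableOn_Ioi_rpow_of_lt (a := -p) (by linarith) ht).mono'
    (Measurable.aestronglyMeasurable (by fun_prop))
    ((ae_restrict_iff' measurableSet_Ioi).mpr (ae_of_all _ fun s hs => by
      rw [norm_of_nonneg (rpow_nonneg (ht.le.trans (le_max_of_le_right hs.le)) _)]
      exact max_rpow_neg_le (ht.trans hs) (by linarith)))

lemma integrableOn_Ioi_of_abs_le_max_rpow {f : ℝ → ℝ} {C b t p : ℝ} (ht : 0 < t)
    (hp : 1 < p) (hf : Measurable f) (hfb : ∀ s ∈ Ioi t, |f s| ≤ C * max b s ^ (-p)) :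
    IntegrableOn f (Ioi t) :=
  ((integrableOn_Ioi_max_rpow_neg ht hp).const_mul C).mono' hf.aestronglyMeasurable
    ((ae_restrict_iff' measurableSet_Ioi).mpr (ae_of_all _ hfb))

lemma pd_eq_of_hasFDerivAt {f : (Fin 2 → ℝ) → ℝ} {g x : Fin 2 → ℝ}
    (h : HasFDerivAt f (covec g) x) (k : Fin 2) : pd k f x = g k := by
  rw [pd, h.fderiv, covec_single]

def kron (i j : Fin 2) : ℝ := if i = j then 1 else 0

lemma abs_kron_le (i j : Fin 2) : |kron i j| ≤ 1 := by
  unfold kron; split_ifs <;> norm_num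

lemma hasFDerivAt_coord (j : Fin 2) (x : Fin 2 → ℝ) :
    HasFDerivAt (fun z : Fin 2 → ℝ => z j) (covec fun i => kron i j) x := by
  refine (hasFDerivAt_apply j x).congr_fderiv (ContinuousLinearMap.ext fun v => ?_)
  fin_cases j <;> simp [kron]

lemma hasFDerivAt_nsq (x : Fin 2 → ℝ) : HasFDerivAt nsq (covec fun i => 2 * x i) x := by
  have h := ((hasFDerivAt_coord 0 x).mul (hasFDerivAt_coord 0 x)).add
    ((hasFDerivAt_coord 1 x).mul (hasFDerivAt_coord 1 x))
  refine (h.congr_fderiv (ContinuousLinearMap.ext fun v => ?_)).congr_of_eventuallyEq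
    (Filter.Eventually.of_forall fun z => by simp only [nsq, Pi.add_apply, Pi.mul_apply]; ring)
  simp only [add_apply, smul_apply, covec_apply, smul_eq_mul, Fin.sum_univ_two, kron]
  norm_num; ring

noncomputable def heatGrad (k : Fin 2) (x : Fin 2 → ℝ) (t : ℝ) : ℝ :=
  -(x k) / (2 * t) * heatG x t

noncomputable def heatHess (i j : Fin 2) (x : Fin 2 → ℝ) (t : ℝ) : ℝ :=
  (x i * x j / (4 * t ^ 2) - kron i j / (2 * t)) * heatG x t

noncomputable def heatDeriv3 (k i j : Fin 2) (x : Fin 2 → ℝ) (t : ℝ) : ℝ :=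
  ((kron k i * x j + kron k j * x i + kron i j * x k) / (4 * t ^ 2)
    - x i * x j * x k / (8 * t ^ 3)) * heatG x t

lemma nsq_nonneg (x : Fin 2 → ℝ) : 0 ≤ nsq x := by
  unfold nsq; positivity

lemma abs_coord_le_sqrt (x : Fin 2 → ℝ) (k : Fin 2) : |x k| ≤ √(nsq x) :=
  abs_le_sqrt (by fin_cases k <;> simp [nsq, sq_nonneg])

lemma heatG_eq (x : Fin 2 → ℝ) (t : ℝ) :
    heatG x t = exp (-nsq x / (4 * t)) / (4 * π * t) := by
  rw [heatG]; ring

section Derivatives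

variable {t : ℝ} (ht : t ≠ 0)
include ht

lemma hasFDerivAt_heatG (x : Fin 2 → ℝ) :
    HasFDerivAt (fun z => heatG z t) (covec fun k => heatGrad k x t) x := by
  have h := (((hasFDerivAt_nsq x).const_mul (-(1 / (4 * t)))).exp).const_mul (1 / (4 * π * t))
  refine (h.congr_fderiv (ContinuousLinearMap.ext fun v => ?_)).congr_of_eventuallyEq
    (Filter.Eventually.of_forall fun z => by simp only [heatG]; ring_nf)
  simp only [smul_apply, covec_apply, smul_eq_mul, Fin.sum_univ_two, heatGrad, heatG]
  field_simp
  ring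

lemma hasFDerivAt_mul_heatG {P : (Fin 2 → ℝ) → ℝ} {L : (Fin 2 → ℝ) →L[ℝ] ℝ}
    {x : Fin 2 → ℝ} (hP : HasFDerivAt P L x) :
    HasFDerivAt (fun z => P z * heatG z t)
      (covec fun k => L (Pi.single k 1) * heatG x t + P x * heatGrad k x t) x := by
  rw [eq_covec L] at hP
  exact (hP.mul (hasFDerivAt_heatG ht x)).congr_fderiv (ContinuousLinearMap.ext fun v => by
    simp only [add_apply, smul_apply, covec_apply, smul_eq_mul, Fin.sum_univ_two]; ring)

lemma hasFDerivAt_heatGrad (j : Fin 2) (x : Fin 2 → ℝ) :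
    HasFDerivAt (fun z => heatGrad j z t) (covec fun i => heatHess i j x t) x := by
  have h := hasFDerivAt_mul_heatG ht ((hasFDerivAt_coord j x).const_mul (-(1 / (2 * t))))
  refine (h.congr_fderiv (ContinuousLinearMap.ext fun v => ?_)).congr_of_eventuallyEq
    (Filter.Eventually.of_forall fun z => by simp only [heatGrad]; ring)
  simp only [smul_apply, covec_apply, smul_eq_mul, Fin.sum_univ_two, heatGrad, heatHess,
    Pi.single_apply]
  norm_num
  field_simp
  ring

lemma hasFDerivAt_heatHess (i j : Fin 2) (x : Fin 2 → ℝ) :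
    HasFDerivAt (fun z => heatHess i j z t) (covec fun k => heatDeriv3 k i j x t) x := by
  have h := hasFDerivAt_mul_heatG ht ((((hasFDerivAt_coord i x).mul
    (hasFDerivAt_coord j x)).const_mul (1 / (4 * t ^ 2))).sub_const (kron i j / (2 * t)))
  refine (h.congr_fderiv (ContinuousLinearMap.ext fun v => ?_)).congr_of_eventuallyEq
    (Filter.Eventually.of_forall fun z => by simp only [heatHess, Pi.mul_apply]; ring)
  simp only [add_apply, smul_apply, covec_apply, smul_eq_mul, Fin.sum_univ_two, Pi.mul_apply,
    heatGrad, heatDeriv3, Pi.single_apply]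
  norm_num
  field_simp
  ring

end Derivatives

section PointwiseBounds

variable {t : ℝ} (ht : 0 < t) (x : Fin 2 → ℝ)
include ht

lemma abs_mul_heatG (P : ℝ) :
    |P * heatG x t| = |P| * exp (-nsq x / (4 * t)) / (4 * π * t) := by
  have hG : 0 ≤ exp (-nsq x / (4 * t)) / (4 * π * t) := by positivity
  rw [heatG_eq, abs_mul, abs_of_nonneg hG, mul_div_assoc]

lemma abs_heatGrad_le (k : Fin 2) : |heatGrad k x t| ≤ 2 * max (nsq x) t ^ (-(3 / 2) : ℝ) := by
  set r := √(nsq x)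
  have hr : 0 ≤ r := sqrt_nonneg _
  have hb : nsq x = r ^ 2 := (sq_sqrt (nsq_nonneg x)).symm
  have hx : |x k| ≤ r := abs_coord_le_sqrt x k
  calc |heatGrad k x t| = |x k| / t ^ 2 * exp (-r ^ 2 / (4 * t)) / (8 * π) := by
        rw [heatGrad, abs_mul_heatG ht, abs_div, abs_neg, abs_of_pos (by positivity : 0 < 2 * t),
          hb]
        field_simp; ring
    _ ≤ r ^ 1 / t ^ 2 * exp (-r ^ 2 / (4 * t)) / (8 * π) := by rw [pow_one]; gcongr
    _ ≤ 32 * max (nsq x) t ^ (-(3 / 2) : ℝ) / (8 * π) := by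
        rw [hb]; gcongr ?_ / _
        exact (pow_div_pow_mul_exp_le 1 2 hr ht).trans_eq (by norm_num)
    _ = 4 / π * max (nsq x) t ^ (-(3 / 2) : ℝ) := by ring
    _ ≤ 2 * max (nsq x) t ^ (-(3 / 2) : ℝ) := by
        gcongr
        rw [div_le_iff₀ pi_pos]
        linarith [pi_gt_three]

lemma abs_heatHess_le (i j : Fin 2) : |heatHess i j x t| ≤ 10 * max (nsq x) t ^ (-2 : ℝ) := by
  set r := √(nsq x)
  have hr : 0 ≤ r := sqrt_nonneg _
  have hb : nsq x = r ^ 2 := (sq_sqrt (nsq_nonneg x)).symm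
  have hx : ∀ k, |x k| ≤ r := abs_coord_le_sqrt x
  have hpoly :
      |x i * x j / (4 * t ^ 2) - kron i j / (2 * t)| ≤ r ^ 2 / (4 * t ^ 2) + 1 / (2 * t) := by
    refine (abs_sub _ _).trans (add_le_add ?_ ?_)
    · rw [abs_div, abs_of_pos (by positivity : (0 : ℝ) < 4 * t ^ 2), abs_mul]
      gcongr ?_ / _
      rw [sq]; gcongr <;> apply hx
    · rw [abs_div, abs_of_pos (by positivity : 0 < 2 * t)]
      gcongr; exact abs_kron_le i j
  calc |heatHess i j x t|
      ≤ (r ^ 2 / (4 * t ^ 2) + 1 / (2 * t)) * exp (-r ^ 2 / (4 * t)) / (4 * π * t) := by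
        rw [heatHess, abs_mul_heatG ht, hb]; gcongr
    _ = (r ^ 2 / t ^ 3 * exp (-r ^ 2 / (4 * t))) / (16 * π)
          + (r ^ 0 / t ^ 2 * exp (-r ^ 2 / (4 * t))) / (8 * π) := by
        field_simp; ring
    _ ≤ 384 * max (nsq x) t ^ (-2 : ℝ) / (16 * π)
          + 32 * max (nsq x) t ^ (-2 : ℝ) / (8 * π) := by
        rw [hb]; gcongr ?_ / _ + ?_ / _
        · exact (pow_div_pow_mul_exp_le 2 3 hr ht).trans_eq (by norm_num)
        · exact (pow_div_pow_mul_exp_le 0 2 hr ht).trans_eq (by norm_num)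
    _ = 28 / π * max (nsq x) t ^ (-2 : ℝ) := by ring
    _ ≤ 10 * max (nsq x) t ^ (-2 : ℝ) := by
        gcongr
        rw [div_le_iff₀ pi_pos]
        linarith [pi_gt_three]

lemma abs_heatDeriv3_le (k i j : Fin 2) :
    |heatDeriv3 k i j x t| ≤ 100 * max (nsq x) t ^ (-(5 / 2) : ℝ) := by
  set r := √(nsq x)
  have hr : 0 ≤ r := sqrt_nonneg _
  have hb : nsq x = r ^ 2 := (sq_sqrt (nsq_nonneg x)).symm
  have hx : ∀ k, |x k| ≤ r := abs_coord_le_sqrt x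
  have hkron : ∀ i j l, |kron i j * x l| ≤ r := fun i j l => by
    rw [abs_mul]; nlinarith [abs_kron_le i j, hx l, abs_nonneg (kron i j), abs_nonneg (x l)]
  have hpoly : |(kron k i * x j + kron k j * x i + kron i j * x k) / (4 * t ^ 2)
      - x i * x j * x k / (8 * t ^ 3)| ≤ 3 * r / (4 * t ^ 2) + r ^ 3 / (8 * t ^ 3) := by
    refine (abs_sub _ _).trans (add_le_add ?_ ?_)
    · rw [abs_div, abs_of_pos (by positivity : (0 : ℝ) < 4 * t ^ 2)]
      gcongr
      linarith [abs_add_three (kron k i * x j) (kron k j * x i) (kron i j * x k),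
        hkron k i j, hkron k j i, hkron i j k]
    · rw [abs_div, abs_of_pos (by positivity : (0 : ℝ) < 8 * t ^ 3), abs_mul, abs_mul]
      gcongr ?_ / _
      rw [pow_three']; gcongr <;> apply hx
  calc |heatDeriv3 k i j x t| ≤ (3 * r / (4 * t ^ 2) + r ^ 3 / (8 * t ^ 3))
          * exp (-r ^ 2 / (4 * t)) / (4 * π * t) := by
        rw [heatDeriv3, abs_mul_heatG ht, hb]; gcongr
    _ = 3 * (r ^ 1 / t ^ 3 * exp (-r ^ 2 / (4 * t))) / (16 * π)
          + (r ^ 3 / t ^ 4 * exp (-r ^ 2 / (4 * t))) / (32 * π) := by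
        field_simp; ring
    _ ≤ 3 * (384 * max (nsq x) t ^ (-(5 / 2) : ℝ)) / (16 * π)
          + 6144 * max (nsq x) t ^ (-(5 / 2) : ℝ) / (32 * π) := by
        rw [hb]; gcongr 3 * ?_ / _ + ?_ / _
        · exact (pow_div_pow_mul_exp_le 1 3 hr ht).trans_eq (by norm_num)
        · exact (pow_div_pow_mul_exp_le 3 4 hr ht).trans_eq (by norm_num)
    _ = 264 / π * max (nsq x) t ^ (-(5 / 2) : ℝ) := by ring
    _ ≤ 100 * max (nsq x) t ^ (-(5 / 2) : ℝ) := by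
        gcongr
        rw [div_le_iff₀ pi_pos]
        linarith [pi_gt_three]

end PointwiseBounds

section KernelDerivative

variable {t : ℝ} (ht : 0 < t)
include ht

lemma hasFDerivAt_setIntegral_heatHess (i j : Fin 2) (x : Fin 2 → ℝ) :
    HasFDerivAt (fun z => ∫ s in Ioi t, heatHess i j z s)
      (covec fun k => ∫ s in Ioi t, heatDeriv3 k i j x s) x := by
  have hint : ∀ k, IntegrableOn (fun s => heatDeriv3 k i j x s) (Ioi t) := fun k =>
    integrableOn_Ioi_of_abs_le_max_rpow ht (by norm_num) (by unfold heatDeriv3 heatG; fun_prop)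
      fun s hs => abs_heatDeriv3_le (ht.trans hs) x k i j
  have h := hasFDerivAt_integral_of_dominated_of_fderiv_le (μ := volume.restrict (Ioi t))
    (F' := fun z s => covec fun k => heatDeriv3 k i j z s) (x₀ := x) (s := univ)
    (bound := fun s => 2 * (100 * s ^ (-(5 / 2) : ℝ))) Filter.univ_mem
    (Filter.Eventually.of_forall fun z => by unfold heatHess heatG; fun_prop)
    (integrableOn_Ioi_of_abs_le_max_rpow ht (by norm_num) (by unfold heatHess heatG; fun_prop)
      fun s hs => abs_heatHess_le (ht.trans hs) x i j)
    (by unfold covec heatDeriv3 heatG; fun_prop) ?_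
    (((integrableOn_Ioi_rpow_of_lt (by norm_num) ht).const_mul _).const_mul _)
    ((ae_restrict_iff' measurableSet_Ioi).mpr (ae_of_all _ fun s hs z _ =>
      hasFDerivAt_heatHess (ht.trans hs).ne' i j z))
  · rwa [integral_covec hint] at h
  · refine (ae_restrict_iff' measurableSet_Ioi).mpr (ae_of_all _ fun s hs z _ => ?_)
    have hs0 : 0 < s := ht.trans hs
    have hbound : ∀ k, |heatDeriv3 k i j z s| ≤ 100 * s ^ (-(5 / 2) : ℝ) := fun k =>
      (abs_heatDeriv3_le hs0 z k i j).trans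
        (mul_le_mul_of_nonneg_left (max_rpow_neg_le hs0 (by norm_num)) (by norm_num))
    refine (norm_covec_le _).trans ?_
    rw [Fin.sum_univ_two, two_mul]
    exact add_le_add (hbound 0) (hbound 1)

lemma pd_Kent (k i j : Fin 2) (x : Fin 2 → ℝ) :
    pd k (fun z => Kent i j z t) x =
      kron i j * heatGrad k x t + ∫ s in Ioi t, heatDeriv3 k i j x s := by
  have hKent : (fun z => Kent i j z t) =
      fun z => kron i j * heatG z t + ∫ s in Ioi t, heatHess i j z s := by
    funext z
    refine congrArg₂ (· + ·) rfl (setIntegral_congr_fun measurableSet_Ioi fun s hs => ?_)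
    have hs0 : s ≠ 0 := (ht.trans hs).ne'
    simp only [funext fun w => pd_eq_of_hasFDerivAt (hasFDerivAt_heatG hs0 w) j,
      pd_eq_of_hasFDerivAt (hasFDerivAt_heatGrad hs0 j z) i]
  have h : HasFDerivAt (fun z => kron i j * heatG z t + ∫ s in Ioi t, heatHess i j z s) _ x :=
    ((hasFDerivAt_heatG ht.ne' x).const_mul (kron i j)).add
      (hasFDerivAt_setIntegral_heatHess ht i j x)
  rw [hKent, pd, h.fderiv]
  simp only [add_apply, smul_apply, covec_single, smul_eq_mul]

lemma abs_setIntegral_heatDeriv3_le (k i j : Fin 2) (x : Fin 2 → ℝ) :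
    |∫ s in Ioi t, heatDeriv3 k i j x s| ≤ 100 * (5 / 3 * max (nsq x) t ^ (-(3 / 2) : ℝ)) :=
  calc |∫ s in Ioi t, heatDeriv3 k i j x s|
      ≤ ∫ s in Ioi t, 100 * max (nsq x) s ^ (-(5 / 2) : ℝ) := by
        rw [← norm_eq_abs]
        exact norm_integral_le_of_norm_le
          ((integrableOn_Ioi_max_rpow_neg ht (by norm_num)).const_mul _)
          ((ae_restrict_iff' measurableSet_Ioi).mpr (ae_of_all _ fun s hs =>
            abs_heatDeriv3_le (ht.trans hs) x k i j))
    _ = 100 * ∫ s in Ioi t, max (nsq x) s ^ (-(5 / 2) : ℝ) := integral_const_mul _ _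
    _ ≤ 100 * (5 / 2 / (5 / 2 - 1) * max (nsq x) t ^ (1 - 5 / 2 : ℝ)) := by
        gcongr; exact setIntegral_Ioi_max_rpow_neg_le ht (by norm_num)
    _ = 100 * (5 / 3 * max (nsq x) t ^ (-(3 / 2) : ℝ)) := by norm_num

lemma abs_pd_Kent_le (k i j : Fin 2) (x : Fin 2 → ℝ) :
    |pd k (fun z => Kent i j z t) x| ≤ 170 * max (nsq x) t ^ (-(3 / 2) : ℝ) := by
  have hM : 0 ≤ max (nsq x) t ^ (-(3 / 2) : ℝ) := rpow_nonneg (le_max_of_le_right ht.le) _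
  calc |pd k (fun z => Kent i j z t) x|
      ≤ |kron i j| * |heatGrad k x t| + |∫ s in Ioi t, heatDeriv3 k i j x s| := by
        rw [pd_Kent ht, ← abs_mul]; exact abs_add_le _ _
    _ ≤ 1 * (2 * max (nsq x) t ^ (-(3 / 2) : ℝ))
          + 100 * (5 / 3 * max (nsq x) t ^ (-(3 / 2) : ℝ)) := by
        gcongr
        exacts [abs_kron_le i j, abs_heatGrad_le ht x k, abs_setIntegral_heatDeriv3_le ht k i j x]
    _ ≤ 170 * max (nsq x) t ^ (-(3 / 2) : ℝ) := by linarith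

lemma gradK_le (x : Fin 2 → ℝ) : gradK x t ≤ 1360 * max (nsq x) t ^ (-(3 / 2) : ℝ) := by
  have h := fun i j k => abs_pd_Kent_le ht k i j x
  simp only [gradK, Fin.sum_univ_two]
  linarith [h 0 0 0, h 0 0 1, h 0 1 0, h 0 1 1, h 1 0 0, h 1 0 1, h 1 1 0, h 1 1 1]

end KernelDerivative

lemma nsq_pos {x : Fin 2 → ℝ} (hx : x ≠ 0) : 0 < nsq x := by
  refine (nsq_nonneg x).lt_of_ne' fun h => hx (funext fun i => ?_)
  obtain ⟨h0, h1⟩ := (add_eq_zero_iff_of_nonneg (sq_nonneg _) (sq_nonneg _)).mp h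
  fin_cases i
  exacts [pow_eq_zero_iff two_ne_zero |>.mp h0, pow_eq_zero_iff two_ne_zero |>.mp h1]

lemma nsq_rot (θ : ℝ) (x : Fin 2 → ℝ) : nsq (rot θ x) = nsq x := by
  simp only [nsq, rot, Matrix.cons_val_zero, Matrix.cons_val_one]
  linear_combination (x 0 ^ 2 + x 1 ^ 2) * sin_sq_add_cos_sq θ

lemma gradK_nonneg (x : Fin 2 → ℝ) (t : ℝ) : 0 ≤ gradK x t := by
  unfold gradK; positivity

/-- `∫₀^∞ |(∇K)(O(at)x, t)| dt ≤ C/|x|` with `C` independent of `x` and `a`. -/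
theorem time_integral_gradK_bound :
    ∃ C : ℝ, 0 < C ∧ ∀ (a : ℝ) (x : Fin 2 → ℝ), x ≠ 0 →
      ∫ t in Set.Ioi (0 : ℝ), gradK (rot (a * t) x) t ≤ C / Real.sqrt (nsq x) := by
  refine ⟨4080, by norm_num, fun a x hx => ?_⟩
  have hb : 0 < nsq x := nsq_pos hx
  calc ∫ t in Ioi 0, gradK (rot (a * t) x) t
      ≤ ∫ t in Ioi 0, 1360 * max (nsq x) t ^ (-(3 / 2) : ℝ) :=
        integral_mono_of_nonneg (ae_of_all _ fun t => gradK_nonneg _ _)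
          ((integrableOn_max_rpow_neg hb (by norm_num)).const_mul _)
          ((ae_restrict_iff' measurableSet_Ioi).mpr (ae_of_all _ fun t ht => by
            simpa only [nsq_rot] using gradK_le ht (rot (a * t) x)))
    _ = 1360 * (3 / 2 / (3 / 2 - 1) * nsq x ^ (1 - 3 / 2 : ℝ)) := by
        rw [integral_const_mul, integral_max_rpow_neg hb (by norm_num)]
    _ = 4080 / √(nsq x) := by
        rw [sqrt_eq_rpow, div_eq_mul_inv 4080, ← rpow_neg hb.le]; norm_num; ring
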